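/- arXiv:1806.03958 — 2 statements merged into one kernel-verified Lean document; each statement's English description precedes it below -/
import Mathlib

section
/- If C ∈ {±1}^{L×K} is an antipodal uniquely decodable code set whose first row consists entirely of +1's, then the binary matrix B = (C + J)/2 ∈ {0,1}^{L×K} (where J is the all-ones matrix) is also uniquely decodable, i.e., the only z ∈ {0, ±1}^K with B·z = 0 is z = 0. -/
/-- if `C ∈ {±1}^{L×K}` is UD and its first row is all ones, then
`B = (C + J)/2 ∈ {0,1}^{L×K}` is also UD. -/
theorem stmt1 (L K : ℕ) (hL : 0 < L) (C B : Matrix (Fin L) (Fin K) ℤ)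
    (hC : ∀ i j, C i j = 1 ∨ C i j = -1)
    (hrow : ∀ j, C ⟨0, hL⟩ j = 1)
    (hUD : ∀ z : Fin K → ℤ, (∀ i, z i = 0 ∨ z i = 1 ∨ z i = -1) →
      C.mulVec z = 0 → z = 0)
    (hB : ∀ i j, 2 * B i j = C i j + 1) :
    ∀ z : Fin K → ℤ, (∀ i, z i = 0 ∨ z i = 1 ∨ z i = -1) →
      B.mulVec z = 0 → z = 0 := by
  intro z hz hBz
  -- For each row i, ∑ C i j * z j + ∑ z j = 0
  have key : ∀ i : Fin L, (∑ j, C i j * z j) + (∑ j, z j) = 0 := by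
    intro i
    have h0 : (Matrix.mulVec B z) i = 0 := by rw [hBz]; rfl
    have : ∑ j, (2 * B i j) * z j = 0 := by
      have : (2 : ℤ) * ∑ j, B i j * z j = 0 := by
        simp [Matrix.mulVec, dotProduct] at h0
        rw [h0]; ring
      rw [Finset.mul_sum] at this
      simpa [mul_assoc] using this
    calc (∑ j, C i j * z j) + (∑ j, z j)
        = ∑ j, (C i j + 1) * z j := by rw [← Finset.sum_add_distrib]; congr 1; ext j; ring
      _ = ∑ j, (2 * B i j) * z j := by
          congr 1; ext j; rw [hB i j]
      _ = 0 := this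
  have hsum : (∑ j, z j) = 0 := by
    have h0 := key ⟨0, hL⟩
    have : (∑ j, z j) + (∑ j, z j) = 0 := by
      calc (∑ j, z j) + (∑ j, z j) = (∑ j, C ⟨0, hL⟩ j * z j) + (∑ j, z j) := by
            congr 1; apply Finset.sum_congr rfl; intro j _; rw [hrow j, one_mul]
        _ = 0 := h0
    omega
  apply hUD z hz
  funext i
  have := key i
  rw [hsum, add_zero] at this
  simpa [Matrix.mulVec, dotProduct] using this
end

section
/- For L = 4, no two columns can be appended to H₄ while preserving unique decodability: for any two distinct vectors v₁, v₂ ∈ {±1}^4 such that neither ±v₁ nor ±v₂ is a column of H₄, the matrix [H₄ | v₁ | v₂] has a nonzero vector z ∈ {0,±1}^6 in its kernel. -/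
lemma parity4 (v : Fin 4 → ℤ) (h : ∀ i, v i = 1 ∨ v i = -1)
    (n1 : v ≠ ![1,1,1,1]) (n2 : v ≠ ![1,-1,1,-1]) (n3 : v ≠ ![1,1,-1,-1]) (n4 : v ≠ ![1,-1,-1,1])
    (n5 : v ≠ ![-1,-1,-1,-1]) (n6 : v ≠ ![-1,1,-1,1]) (n7 : v ≠ ![-1,-1,1,1])
    (n8 : v ≠ ![-1,1,1,-1]) :
    (v 0 + v 1 + v 2 + v 3 = 2 ∨ v 0 + v 1 + v 2 + v 3 = -2) ∧
    (v 0 - v 1 + v 2 - v 3 = 2 ∨ v 0 - v 1 + v 2 - v 3 = -2) ∧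
    (v 0 + v 1 - v 2 - v 3 = 2 ∨ v 0 + v 1 - v 2 - v 3 = -2) ∧
    (v 0 - v 1 - v 2 + v 3 = 2 ∨ v 0 - v 1 - v 2 + v 3 = -2) := by
  rcases h 0 with e0|e0 <;> rcases h 1 with e1|e1 <;> rcases h 2 with e2|e2 <;>
      rcases h 3 with e3|e3 <;>
  first
  | (refine absurd ?_ n1; funext i; (fin_cases i <;> simp [e0, e1, e2, e3]); done)
  | (refine absurd ?_ n2; funext i; (fin_cases i <;> simp [e0, e1, e2, e3]); done)
  | (refine absurd ?_ n3; funext i; (fin_cases i <;> simp [e0, e1, e2, e3]); done)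
  | (refine absurd ?_ n4; funext i; (fin_cases i <;> simp [e0, e1, e2, e3]); done)
  | (refine absurd ?_ n5; funext i; (fin_cases i <;> simp [e0, e1, e2, e3]); done)
  | (refine absurd ?_ n6; funext i; (fin_cases i <;> simp [e0, e1, e2, e3]); done)
  | (refine absurd ?_ n7; funext i; (fin_cases i <;> simp [e0, e1, e2, e3]); done)
  | (refine absurd ?_ n8; funext i; (fin_cases i <;> simp [e0, e1, e2, e3]); done)
  | (refine ⟨?_, ?_, ?_, ?_⟩ <;> omega)


lemma vec6_app (a b c d e f : ℤ) :
    ![a,b,c,d,e,f] 0 = a ∧ ![a,b,c,d,e,f] 1 = b ∧ ![a,b,c,d,e,f] 2 = c ∧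
    ![a,b,c,d,e,f] 3 = d ∧ ![a,b,c,d,e,f] 4 = e ∧ ![a,b,c,d,e,f] 5 = f :=
  ⟨rfl, rfl, rfl, rfl, rfl, rfl⟩

lemma vec4_0 (a b c d : ℤ) : ![a,b,c,d] 0 = a := rfl
lemma vec4_1 (a b c d : ℤ) : ![a,b,c,d] 1 = b := rfl
lemma vec4_2 (a b c d : ℤ) : ![a,b,c,d] 2 = c := rfl
lemma vec4_3 (a b c d : ℤ) : ![a,b,c,d] 3 = d := rfl

lemma vec6_0 (a b c d e f : ℤ) : ![a,b,c,d,e,f] 0 = a := rfl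
lemma vec6_1 (a b c d e f : ℤ) : ![a,b,c,d,e,f] 1 = b := rfl
lemma vec6_2 (a b c d e f : ℤ) : ![a,b,c,d,e,f] 2 = c := rfl
lemma vec6_3 (a b c d e f : ℤ) : ![a,b,c,d,e,f] 3 = d := rfl
lemma vec6_4 (a b c d e f : ℤ) : ![a,b,c,d,e,f] 4 = e := rfl
lemma vec6_5 (a b c d e f : ℤ) : ![a,b,c,d,e,f] 5 = f := rfl

lemma fin4_m0 (h : 0 < 4) : (⟨0,h⟩ : Fin 4) = 0 := rfl
lemma fin4_m1 (h : 1 < 4) : (⟨1,h⟩ : Fin 4) = 1 := rfl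
lemma fin4_m2 (h : 2 < 4) : (⟨2,h⟩ : Fin 4) = 2 := rfl
lemma fin4_m3 (h : 3 < 4) : (⟨3,h⟩ : Fin 4) = 3 := rfl

lemma vec6_m0 (a b c d e f : ℤ) (h : 0 < 6) : ![a,b,c,d,e,f] ⟨0,h⟩ = a := rfl
lemma vec6_m1 (a b c d e f : ℤ) (h : 1 < 6) : ![a,b,c,d,e,f] ⟨1,h⟩ = b := rfl
lemma vec6_m2 (a b c d e f : ℤ) (h : 2 < 6) : ![a,b,c,d,e,f] ⟨2,h⟩ = c := rfl
lemma vec6_m3 (a b c d e f : ℤ) (h : 3 < 6) : ![a,b,c,d,e,f] ⟨3,h⟩ = d := rfl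
lemma vec6_m4 (a b c d e f : ℤ) (h : 4 < 6) : ![a,b,c,d,e,f] ⟨4,h⟩ = e := rfl
lemma vec6_m5 (a b c d e f : ℤ) (h : 5 < 6) : ![a,b,c,d,e,f] ⟨5,h⟩ = f := rfl

lemma bound4 (P Q : ℤ) (hP : P = 2 ∨ P = -2) (hQ : Q = 2 ∨ Q = -2) :
    -4 ≤ P - Q ∧ P - Q ≤ 4 ∧ (P - Q) % 4 = 0 := by omega

set_option maxHeartbeats 1600000 in
/-- appending any two admissible distinct `±1` columns (neither of which is `±` a
column of `H₄`) to `H₄` destroys unique decodability. -/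
theorem stmt9 (v₁ v₂ : Fin 4 → ℤ)
    (h1 : ∀ i, v₁ i = 1 ∨ v₁ i = -1) (h2 : ∀ i, v₂ i = 1 ∨ v₂ i = -1)
    (hne : v₁ ≠ v₂)
    (H4 : Matrix (Fin 4) (Fin 4) ℤ)
    (hH4 : H4 = !![1, 1, 1, 1; 1, -1, 1, -1; 1, 1, -1, -1; 1, -1, -1, 1])
    (hv1 : ∀ c : Fin 4, v₁ ≠ (fun r => H4 r c) ∧ v₁ ≠ (fun r => -H4 r c))
    (hv2 : ∀ c : Fin 4, v₂ ≠ (fun r => H4 r c) ∧ v₂ ≠ (fun r => -H4 r c))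
    (C : Matrix (Fin 4) (Fin 6) ℤ)
    (hCH : ∀ (r : Fin 4) (c : Fin 4), C r (Fin.castLE (by norm_num) c) = H4 r c)
    (hCv1 : ∀ r, C r 4 = v₁ r) (hCv2 : ∀ r, C r 5 = v₂ r) :
    ∃ z : Fin 6 → ℤ, (∀ i, z i = 0 ∨ z i = 1 ∨ z i = -1) ∧ z ≠ 0 ∧
      C.mulVec z = 0 := by
  subst hH4
  have hC0 : ∀ r, C r 0 = ![(1:ℤ),1,1,1] r := fun r => (hCH r 0).trans (by fin_cases r <;> rfl)
  have hC1 : ∀ r, C r 1 = ![(1:ℤ),-1,1,-1] r := fun r => (hCH r 1).trans (by fin_cases r <;> rfl)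
  have hC2 : ∀ r, C r 2 = ![(1:ℤ),1,-1,-1] r := fun r => (hCH r 2).trans (by fin_cases r <;> rfl)
  have hC3 : ∀ r, C r 3 = ![(1:ℤ),-1,-1,1] r := fun r => (hCH r 3).trans (by fin_cases r <;> rfl)
  have col0 : (fun r => !![(1:ℤ), 1, 1, 1; 1, -1, 1, -1; 1, 1, -1, -1; 1, -1, -1, 1] r 0) = ![(1:ℤ),1,1,1] := by funext r; fin_cases r <;> rfl
  have col1 : (fun r => !![(1:ℤ), 1, 1, 1; 1, -1, 1, -1; 1, 1, -1, -1; 1, -1, -1, 1] r 1) = ![(1:ℤ),-1,1,-1] := by funext r; fin_cases r <;> rfl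
  have col2 : (fun r => !![(1:ℤ), 1, 1, 1; 1, -1, 1, -1; 1, 1, -1, -1; 1, -1, -1, 1] r 2) = ![(1:ℤ),1,-1,-1] := by funext r; fin_cases r <;> rfl
  have col3 : (fun r => !![(1:ℤ), 1, 1, 1; 1, -1, 1, -1; 1, 1, -1, -1; 1, -1, -1, 1] r 3) = ![(1:ℤ),-1,-1,1] := by funext r; fin_cases r <;> rfl
  have ncol0 : (fun r => -(!![(1:ℤ), 1, 1, 1; 1, -1, 1, -1; 1, 1, -1, -1; 1, -1, -1, 1] r 0)) = ![(-1:ℤ),-1,-1,-1] := by funext r; fin_cases r <;> rfl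
  have ncol1 : (fun r => -(!![(1:ℤ), 1, 1, 1; 1, -1, 1, -1; 1, 1, -1, -1; 1, -1, -1, 1] r 1)) = ![(-1:ℤ),1,-1,1] := by funext r; fin_cases r <;> rfl
  have ncol2 : (fun r => -(!![(1:ℤ), 1, 1, 1; 1, -1, 1, -1; 1, 1, -1, -1; 1, -1, -1, 1] r 2)) = ![(-1:ℤ),-1,1,1] := by funext r; fin_cases r <;> rfl
  have ncol3 : (fun r => -(!![(1:ℤ), 1, 1, 1; 1, -1, 1, -1; 1, 1, -1, -1; 1, -1, -1, 1] r 3)) = ![(-1:ℤ),1,1,-1] := by funext r; fin_cases r <;> rfl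
  obtain ⟨hp0, hp1, hp2, hp3⟩ := parity4 v₁ h1
    (by rw [← col0]; exact (hv1 0).1) (by rw [← col1]; exact (hv1 1).1)
    (by rw [← col2]; exact (hv1 2).1) (by rw [← col3]; exact (hv1 3).1)
    (by rw [← ncol0]; exact (hv1 0).2) (by rw [← ncol1]; exact (hv1 1).2)
    (by rw [← ncol2]; exact (hv1 2).2) (by rw [← ncol3]; exact (hv1 3).2)
  obtain ⟨hq0, hq1, hq2, hq3⟩ := parity4 v₂ h2
    (by rw [← col0]; exact (hv2 0).1) (by rw [← col1]; exact (hv2 1).1)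
    (by rw [← col2]; exact (hv2 2).1) (by rw [← col3]; exact (hv2 3).1)
    (by rw [← ncol0]; exact (hv2 0).2) (by rw [← ncol1]; exact (hv2 1).2)
    (by rw [← ncol2]; exact (hv2 2).2) (by rw [← ncol3]; exact (hv2 3).2)
  have k0 := bound4 _ _ hp0 hq0
  have k1 := bound4 _ _ hp1 hq1
  have k2 := bound4 _ _ hp2 hq2
  have k3 := bound4 _ _ hp3 hq3
  clear hp0 hp1 hp2 hp3 hq0 hq1 hq2 hq3
  refine ⟨![ -((v₁ 0 - v₂ 0) + (v₁ 1 - v₂ 1) + (v₁ 2 - v₂ 2) + (v₁ 3 - v₂ 3))/4,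
             -((v₁ 0 - v₂ 0) - (v₁ 1 - v₂ 1) + (v₁ 2 - v₂ 2) - (v₁ 3 - v₂ 3))/4,
             -((v₁ 0 - v₂ 0) + (v₁ 1 - v₂ 1) - (v₁ 2 - v₂ 2) - (v₁ 3 - v₂ 3))/4,
             -((v₁ 0 - v₂ 0) - (v₁ 1 - v₂ 1) - (v₁ 2 - v₂ 2) + (v₁ 3 - v₂ 3))/4,
             1, -1], ?_, ?_, ?_⟩
  · intro i
    fin_cases i <;> simp only [vec6_m0, vec6_m1, vec6_m2, vec6_m3, vec6_m4, vec6_m5] <;> first | omega | norm_num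
  · intro hz
    have := congrFun hz 4
    simp at this
  · funext r
    fin_cases r <;>
      simp only [Matrix.mulVec, dotProduct, Fin.sum_univ_six, hC0, hC1, hC2, hC3,
        hCv1, hCv2, vec6_0, vec6_1, vec6_2, vec6_3, vec6_4, vec6_5, vec6_m0, vec6_m1, vec6_m2, vec6_m3, vec6_m4, vec6_m5, vec4_0, vec4_1, vec4_2,
        vec4_3, fin4_m0, fin4_m1, fin4_m2, fin4_m3, Pi.zero_apply] <;> omega
end
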